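/- arXiv:1804.01657 — 4 statements merged into one kernel-verified Lean document; each statement's English description precedes it below -/
import Mathlib

section
/- Let ε_X, ε_Y, ε_Z ∈ {+1, −1} and let X, Y, Z ∈ I. Then the fusion multiplicity formula of Theorem 5.1(3) agrees with the permutation-orbifold formula of Borisov–Halpern–Schweigert: (1/2)·[ (θhalf_Z/θhalf_X)·ε_X ε_Y ε_Z·∑_{P',Q∈I} S_{Z*P'} S_{X*Q} (θ_{P'}/θ_Q)² N^Y_{P'Q} + ∑_{W∈I} N^W_{YY} N^X_{WZ} ] = (1/2)·[ ∑_{R∈I} S_{YR}² S_{ZR} S_{X*R} / S_{1R}² + ε_X ε_Y ε_Z·∑_{R∈I} S_{YR} P_{ZR} P_{X*R} / S_{1R} ]. -/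
/-!
Both sides split into an untwisted and a twisted part. The untwisted parts agree by the
orthogonality `∑_W S_{W*R} S_{WR'} = δ_{RR'}`, which is `S C S = S⁴ = 1`. In the twisted part the
Verlinde formula turns the double sum into `∑_R S_{Y*R}/S_{1R} (S T̂² S)_{Z*R} (S T̂⁻² S)_{X*R}`;
the modular relations `S² = C`, `(S T̂)³ = C` give `S T̂⁻² S = C T̂ (S T̂² S) T̂`, and after
reindexing `R ↦ R*` the square roots of the twists assemble into `P = T̂^{1/2} (S T̂² S) T̂^{1/2}`.
-/

open Finset Matrix

section Monoid

variable {M : Type*} [Monoid M] {s t t' c : M}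

theorem mul_inv_mul_eq_of_modular (hss : s * s = c) (hcc : c * c = 1) (hct : Commute c t)
    (ht't : t' * t = 1) (hst : (s * t) ^ 3 = c) : s * t' * s = c * (t * s * t) := by
  have hcs : Commute c s := hss ▸ (Commute.refl s).mul_left (Commute.refl s)
  calc s * t' * s = s * t' * s * ((s * t) ^ 3 * c) := by rw [hst, hcc, mul_one]
    _ = c * (t * s * t) := by
      simp only [pow_succ, pow_zero, one_mul, mul_one, mul_assoc, hss, hcc, hct.eq, ht't,
        hct.left_comm, hcs.left_comm, ← mul_assoc s s, ← mul_assoc t' t]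

theorem mul_inv_sq_mul_eq_of_modular (hss : s * s = c) (hcc : c * c = 1) (hct : Commute c t)
    (ht't : t' * t = 1) (hst : (s * t) ^ 3 = c) :
    s * t' ^ 2 * s = c * (t * (s * t ^ 2 * s) * t) := by
  have hcs : Commute c s := hss ▸ (Commute.refl s).mul_left (Commute.refl s)
  calc s * t' ^ 2 * s = (s * t' * s) * c * (s * t' * s) := by
        simp only [pow_two, mul_assoc, hcs.left_comm, ← mul_assoc s s, hss, ← mul_assoc c c, hcc,
          one_mul]
    _ = c * (t * (s * t ^ 2 * s) * t) := by
      rw [mul_inv_mul_eq_of_modular hss hcc hct ht't hst]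
      simp only [pow_two, mul_assoc, hcc, hct.left_comm, hcs.left_comm, one_mul]

end Monoid

namespace Matrix

variable {n K : Type*} [Fintype n] [DecidableEq n] [Semiring K]

theorem commute_permMatrix_diagonal (σ : Equiv.Perm n) {d : n → K} (hd : ∀ i, d (σ i) = d i) :
    Commute (σ.permMatrix K) (diagonal d) := by
  ext i j
  simp only [PEquiv.toMatrix_toPEquiv_mul, PEquiv.mul_toMatrix_toPEquiv, submatrix_apply,
    diagonal_apply, id, ← Equiv.eq_symm_apply]
  split_ifs with h <;> simp [h, ← hd (σ.symm j)]

theorem apply_apply_of_commute_permMatrix (σ : Equiv.Perm n) {A : Matrix n n K}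
    (h : Commute (σ.permMatrix K) A) (i j : n) : A (σ i) (σ j) = A i j := by
  simpa [PEquiv.toMatrix_toPEquiv_mul, PEquiv.mul_toMatrix_toPEquiv] using
    congr_fun₂ h.eq i (σ j)

theorem mul_diagonal_mul_apply (A B : Matrix n n K) (d : n → K) (i j : n) :
    (A * diagonal d * B) i j = ∑ k, A i k * d k * B k j := by
  rw [mul_apply]; simp only [mul_diagonal]

end Matrix

section Fusion

variable {n K : Type*} [Fintype n] [DecidableEq n] [Field K]

/-- `fusionCoeff S one dual Z X Y` is the Verlinde coefficient `N^Z_{XY}`. -/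
def fusionCoeff (S : Matrix n n K) (one : n) (dual : n → n) (Z X Y : n) : K :=
  ∑ R, S X R * S Y R * S (dual Z) R / S one R

theorem sum_apply_perm_mul_apply {S : Matrix n n K} {σ : Equiv.Perm n} (hσ : σ * σ = 1)
    (hS : ∀ i j, S i j = S j i) (hSS : S ^ 2 = σ.permMatrix K) (R R' : n) :
    ∑ W, S (σ W) R * S W R' = if R = R' then 1 else 0 := by
  have hSCS : S * (σ.permMatrix K * S) = 1 :=
    calc S * (σ.permMatrix K * S) = S ^ 2 * S ^ 2 := by rw [← hSS]; simp only [sq, mul_assoc]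
      _ = 1 := by rw [hSS, ← permMatrix_mul, hσ, permMatrix_one]
  have := congr_fun₂ hSCS R' R
  simp only [mul_apply, PEquiv.toMatrix_toPEquiv_mul, submatrix_apply, id, one_apply] at this
  simp only [eq_comm (a := R), ← this]
  exact sum_congr rfl fun W _ => by rw [hS W R', mul_comm]

theorem sum_fusionCoeff_mul_fusionCoeff {S : Matrix n n K} {σ : Equiv.Perm n} (hσ : σ * σ = 1)
    (hS : ∀ i j, S i j = S j i) (hSS : S ^ 2 = σ.permMatrix K) (one X Y Z : n) :
    ∑ W, fusionCoeff S one σ W Y Y * fusionCoeff S one σ X W Z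
      = ∑ R, S Y R ^ 2 * S Z R * S (σ X) R / S one R ^ 2 := by
  calc ∑ W, fusionCoeff S one σ W Y Y * fusionCoeff S one σ X W Z
      = ∑ R, ∑ R', S Y R ^ 2 / S one R * (S Z R' * S (σ X) R' / S one R')
          * ∑ W, S (σ W) R * S W R' := by
        simp only [fusionCoeff, sum_mul_sum]
        simp only [mul_sum]
        rw [sum_comm]
        refine sum_congr rfl fun R _ => ?_
        rw [sum_comm]
        exact sum_congr rfl fun R' _ => sum_congr rfl fun W _ => by ring
    _ = ∑ R, S Y R ^ 2 * S Z R * S (σ X) R / S one R ^ 2 := by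
        simp only [sum_apply_perm_mul_apply hσ hS hSS, mul_ite, mul_one, mul_zero, sum_ite_eq,
          mem_univ, if_true]
        exact sum_congr rfl fun R _ => by ring

theorem sum_sum_mul_fusionCoeff (S : Matrix n n K) (one : n) (dual : n → n) (f g : n → K)
    (A B Y : n) :
    ∑ P, ∑ Q, S A P * S B Q * (f P * g Q) * fusionCoeff S one dual Y P Q
      = ∑ R, S (dual Y) R / S one R * (S * diagonal f * S) A R * (S * diagonal g * S) B R := by
  simp only [fusionCoeff, mul_diagonal_mul_apply, mul_sum, sum_mul]
  rw [sum_comm_cycle]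
  refine sum_congr rfl fun R _ => ?_
  rw [sum_comm]
  exact sum_congr rfl fun Q _ => sum_congr rfl fun P _ => by ring

theorem mul_diagonal_inv_sq_mul_eq {S T : Matrix n n K} {σ : Equiv.Perm n} {θ : n → K} {ζ : K}
    (hσ : σ * σ = 1) (hθσ : ∀ i, θ (σ i) = θ i) (hθ : ∀ i, θ i ≠ 0) (hζ : ζ ≠ 0)
    (hT : T = diagonal fun i => θ i / ζ) (hSS : S ^ 2 = σ.permMatrix K)
    (hST : (S * T) ^ 3 = σ.permMatrix K) :
    S * diagonal (fun i => (ζ / θ i) ^ 2) * S = σ.permMatrix K * (T * (S * T ^ 2 * S) * T) := by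
  have hCC : σ.permMatrix K * σ.permMatrix K = 1 := by rw [← permMatrix_mul, hσ, permMatrix_one]
  have hCT : Commute (σ.permMatrix K) T := hT ▸ commute_permMatrix_diagonal σ (by simp [hθσ])
  have hTinvT : diagonal (fun i => ζ / θ i) * T = 1 := by
    rw [hT, diagonal_mul_diagonal, ← diagonal_one]
    exact congr_arg diagonal (funext fun i => (div_mul_div_cancel₀' hζ _ _).trans (div_self (hθ i)))
  rw [← mul_inv_sq_mul_eq_of_modular (sq S ▸ hSS) hCC hCT hTinvT hST, diagonal_pow]
  rfl

theorem sum_sum_twist_mul_fusionCoeff {S T : Matrix n n K} {σ : Equiv.Perm n} {one : n}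
    {θ : n → K} {ζ : K} (hσ : σ * σ = 1) (hone : σ one = one) (hθσ : ∀ i, θ (σ i) = θ i)
    (hθ : ∀ i, θ i ≠ 0) (hζ : ζ ≠ 0) (hT : T = diagonal fun i => θ i / ζ)
    (hSS : S ^ 2 = σ.permMatrix K) (hST : (S * T) ^ 3 = σ.permMatrix K) (X Y Z : n) :
    ∑ P, ∑ Q, S (σ Z) P * S (σ X) Q * (θ P / θ Q) ^ 2 * fusionCoeff S one σ Y P Q
      = ∑ R, S Y R / S one R * (θ X / ζ * (θ R / ζ)) * (S * T ^ 2 * S) Z R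
          * (S * T ^ 2 * S) (σ X) R := by
  have hCS : Commute (σ.permMatrix K) S := hSS ▸ (Commute.self_pow S 2).symm
  have hCM : Commute (σ.permMatrix K) (S * T ^ 2 * S) := by
    refine (hCS.mul_right (Commute.pow_right ?_ 2)).mul_right hCS
    exact hT ▸ commute_permMatrix_diagonal σ (by simp [hθσ])
  have hσσ (i : n) : σ (σ i) = i := by rw [← Equiv.Perm.mul_apply, hσ, Equiv.Perm.one_apply]
  have hS1 (R : n) : S one (σ R) = S one R := by
    simpa [hone] using apply_apply_of_commute_permMatrix σ hCS one R
  have hMX (R : n) : (S * T ^ 2 * S) X (σ R) = (S * T ^ 2 * S) (σ X) R := by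
    simpa [hσσ] using apply_apply_of_commute_permMatrix σ hCM (σ X) R
  have hsplit (P Q : n) : (θ P / θ Q) ^ 2 = (θ P / ζ) ^ 2 * (ζ / θ Q) ^ 2 := by
    rw [← mul_pow, div_mul_div_cancel₀ hζ]
  have hT2 : T ^ 2 = diagonal fun i => (θ i / ζ) ^ 2 := by rw [hT, diagonal_pow]; rfl
  simp only [hsplit]
  rw [sum_sum_mul_fusionCoeff, ← hT2, mul_diagonal_inv_sq_mul_eq hσ hθσ hθ hζ hT hSS hST,
    ← Equiv.sum_comp σ]
  refine sum_congr rfl fun R _ => ?_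
  generalize S * T ^ 2 * S = M at hCM hMX ⊢
  subst hT
  simp only [PEquiv.toMatrix_toPEquiv_mul, submatrix_apply, id, hσσ, hS1, diagonal_mul,
    mul_diagonal, hθσ, hMX, apply_apply_of_commute_permMatrix σ hCS,
    apply_apply_of_commute_permMatrix σ hCM]
  ring

end Fusion

theorem fusion_formula_agrees_with_BHS_general {I : Type*} [Fintype I] [DecidableEq I]
    (one : I) (star : I → I)
    (hstar : ∀ X, star (star X) = X) (hone : star one = one)
    (S : Matrix I I ℂ) (hSsymm : ∀ X Y, S X Y = S Y X)
    (θ : I → ℂ) (hθ : ∀ X, θ X ≠ 0) (hθs : ∀ X, θ (star X) = θ X)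
    (ζ : ℂ) (hζ : ζ ≠ 0)
    (C : Matrix I I ℂ) (hC : ∀ X Y, C X Y = if Y = star X then 1 else 0)
    (T : Matrix I I ℂ) (hT : T = Matrix.diagonal (fun X => θ X / ζ))
    (hST : (S * T) ^ 3 = C)
    (hSS : S ^ 2 = C)
    (N : I → I → I → ℂ)
    (hN : ∀ Z X Y, N Z X Y = ∑ R, S X R * S Y R * S (star Z) R / S one R)
    (θhalf : I → ℂ) (hθhalf : ∀ X, θhalf X ^ 2 = θ X)
    (hθhalfs : ∀ X, θhalf (star X) = θhalf X)
    (ζhalf : ℂ) (hζhalf : ζhalf ^ 2 = ζ)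
    (Thalf : Matrix I I ℂ) (hThalf : Thalf = Matrix.diagonal (fun X => θhalf X / ζhalf))
    (P : Matrix I I ℂ) (hP : P = Thalf * S * T ^ 2 * S * Thalf)
    (εX εY εZ : ℂ)
    (X Y Z : I) :
    (1 / 2 : ℂ) *
        ((θhalf Z / θhalf X) * (εX * εY * εZ) *
            (∑ P', ∑ Q, S (star Z) P' * S (star X) Q * (θ P' / θ Q) ^ 2 * N Y P' Q)
          + ∑ W, N W Y Y * N X W Z)
      = (1 / 2 : ℂ) *
        ((∑ R, S Y R ^ 2 * S Z R * S (star X) R / S one R ^ 2)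
          + (εX * εY * εZ) * ∑ R, S Y R * P Z R * P (star X) R / S one R) := by
  obtain ⟨σ, rfl⟩ : ∃ σ : Equiv.Perm I, ⇑σ = star := ⟨Function.Involutive.toPerm star hstar, rfl⟩
  have hσ : σ * σ = 1 := Equiv.ext hstar
  obtain rfl : C = σ.permMatrix ℂ := by ext X Y; simp [hC, eq_comm]
  obtain rfl : N = fusionCoeff S one σ := by ext Z X Y; exact hN Z X Y
  have hP_apply (A R : I) : P A R = θhalf A / ζhalf * (S * T ^ 2 * S) A R * (θhalf R / ζhalf) := by
    rw [hP, hThalf, mul_diagonal, Matrix.mul_assoc _ S, Matrix.mul_assoc, diagonal_mul]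
  have hθhalfX : θhalf X ≠ 0 := fun h => hθ X (by rw [← hθhalf X, h, zero_pow two_ne_zero])
  have hB : θhalf Z / θhalf X * ∑ P', ∑ Q, S (σ Z) P' * S (σ X) Q * (θ P' / θ Q) ^ 2 *
      fusionCoeff S one σ Y P' Q = ∑ R, S Y R * P Z R * P (σ X) R / S one R := by
    rw [sum_sum_twist_mul_fusionCoeff hσ hone hθs hθ hζ hT hSS hST, mul_sum]
    refine sum_congr rfl fun R _ => ?_
    rw [hP_apply, hP_apply, hθhalfs, ← hθhalf X, ← hθhalf R, ← hζhalf]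
    field_simp
  rw [sum_fusionCoeff_mul_fusionCoeff hσ hSsymm hSS, ← hB]
  ring

/-- The fusion multiplicity formula of Theorem 5.1(3) agrees with the
permutation-orbifold formula of Borisov–Halpern–Schweigert:
`(1/2)[ (θhalf_Z/θhalf_X) εX εY εZ ∑_{P',Q} S_{Z*P'} S_{X*Q} (θ_{P'}/θ_Q)² N^Y_{P'Q}
        + ∑_W N^W_{YY} N^X_{WZ} ]
  = (1/2)[ ∑_R S_{YR}² S_{ZR} S_{X*R} / S_{1R}²
        + εX εY εZ ∑_R S_{YR} P_{ZR} P_{X*R} / S_{1R} ]`. -/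
theorem fusion_formula_agrees_with_BHS {I : Type*} [Fintype I] [DecidableEq I]
    (one : I) (star : I → I)
    (hstar : ∀ X, star (star X) = X) (hone : star one = one)
    (S : Matrix I I ℂ) (hSsymm : ∀ X Y, S X Y = S Y X)
    (θ : I → ℂ) (hθ : ∀ X, θ X ≠ 0) (hθs : ∀ X, θ (star X) = θ X)
    (ζ : ℂ) (hζ : ζ ≠ 0)
    (C : Matrix I I ℂ) (hC : ∀ X Y, C X Y = if Y = star X then 1 else 0)
    (T : Matrix I I ℂ) (hT : T = Matrix.diagonal (fun X => θ X / ζ))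
    (hST : (S * T) ^ 3 = C)
    (hSS : S ^ 2 = C)
    (hS1 : ∀ R, S one R ≠ 0)
    (N : I → I → I → ℂ)
    (hN : ∀ Z X Y, N Z X Y = ∑ R, S X R * S Y R * S (star Z) R / S one R)
    (θhalf : I → ℂ) (hθhalf : ∀ X, θhalf X ^ 2 = θ X)
    (hθhalfs : ∀ X, θhalf (star X) = θhalf X)
    (ζhalf : ℂ) (hζhalf : ζhalf ^ 2 = ζ) (hζhalf0 : ζhalf ≠ 0)
    (Thalf : Matrix I I ℂ) (hThalf : Thalf = Matrix.diagonal (fun X => θhalf X / ζhalf))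
    (P : Matrix I I ℂ) (hP : P = Thalf * S * T ^ 2 * S * Thalf)
    (εX εY εZ : ℂ)
    (hεX : εX = 1 ∨ εX = -1) (hεY : εY = 1 ∨ εY = -1) (hεZ : εZ = 1 ∨ εZ = -1)
    (X Y Z : I) :
    (1 / 2 : ℂ) *
        ((θhalf Z / θhalf X) * (εX * εY * εZ) *
            (∑ P', ∑ Q, S (star Z) P' * S (star X) Q * (θ P' / θ Q) ^ 2 * N Y P' Q)
          + ∑ W, N W Y Y * N X W Z)
      = (1 / 2 : ℂ) *
        ((∑ R, S Y R ^ 2 * S Z R * S (star X) R / S one R ^ 2)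
          + (εX * εY * εZ) * ∑ R, S Y R * P Z R * P (star X) R / S one R) :=
  fusion_formula_agrees_with_BHS_general one star hstar hone S hSsymm θ hθ hθs ζ hζ C hC T hT hST
    hSS N hN θhalf hθhalf hθhalfs ζhalf hζhalf Thalf hThalf P hP εX εY εZ X Y Z
end

section
/- For all X, Y, Z ∈ I, (θhalf_Z/θhalf_X)·∑_{P',Q∈I} S_{Z*P'} S_{X*Q} (θ_{P'}/θ_Q)² N^Y_{P'Q} = ∑_{R∈I} P_{ZR} P_{X*R} S_{YR} / S_{1R}, where P is the matrix P = T̂^{1/2}·S·T̂²·S·T̂^{1/2}. -/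
open Finset Matrix

/-- For a modular datum with chosen square roots `θhalf` and `ζhalf`, and
`P = T̂^{1/2} · S · T̂² · S · T̂^{1/2}`, we have
`(θhalf_Z/θhalf_X) ∑_{P',Q} S_{Z*P'} S_{X*Q} (θ_{P'}/θ_Q)² N^Y_{P'Q}
  = ∑_R P_{ZR} P_{X*R} S_{YR} / S_{1R}`. -/
theorem twist_sum_eq_P_sum {I : Type*} [Fintype I] [DecidableEq I]
    (one : I) (star : I → I)
    (hstar : ∀ X, star (star X) = X) (hone : star one = one)
    (S : Matrix I I ℂ) (hSsymm : ∀ X Y, S X Y = S Y X)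
    (θ : I → ℂ) (hθ : ∀ X, θ X ≠ 0) (hθs : ∀ X, θ (star X) = θ X)
    (ζ : ℂ) (hζ : ζ ≠ 0)
    (C : Matrix I I ℂ) (hC : ∀ X Y, C X Y = if Y = star X then 1 else 0)
    (T : Matrix I I ℂ) (hT : T = Matrix.diagonal (fun X => θ X / ζ))
    (hST : (S * T) ^ 3 = C)
    (hSS : S ^ 2 = C)
    (hS1 : ∀ R, S one R ≠ 0)
    (N : I → I → I → ℂ)
    (hN : ∀ Z X Y, N Z X Y = ∑ R, S X R * S Y R * S (star Z) R / S one R)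
    (θhalf : I → ℂ) (hθhalf : ∀ X, θhalf X ^ 2 = θ X)
    (hθhalfs : ∀ X, θhalf (star X) = θhalf X)
    (ζhalf : ℂ) (hζhalf : ζhalf ^ 2 = ζ) (hζhalf0 : ζhalf ≠ 0)
    (Thalf : Matrix I I ℂ) (hThalf : Thalf = Matrix.diagonal (fun X => θhalf X / ζhalf))
    (P : Matrix I I ℂ) (hP : P = Thalf * S * T ^ 2 * S * Thalf)
    (X Y Z : I) :
    (θhalf Z / θhalf X) *
        ∑ P', ∑ Q, S (star Z) P' * S (star X) Q * (θ P' / θ Q) ^ 2 * N Y P' Q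
      = ∑ R, P Z R * P (star X) R * S Y R / S one R := by
  -- basic entrywise facts about C
  have hmulC : ∀ (M : Matrix I I ℂ) (x r : I), (M * C) x r = M x (star r) := by
    intro M x r
    rw [Matrix.mul_apply]
    have h : ∀ k, M x k * C k r = if k = star r then M x k else 0 := by
      intro k; rw [hC]
      by_cases h : k = star r
      · subst h; simp [hstar]
      · have h2 : r ≠ star k := by
          intro hr; apply h; rw [hr, hstar]
        simp [h2, h]
    simp only [h, Finset.sum_ite_eq', Finset.mem_univ, if_true]
  have hCmul : ∀ (M : Matrix I I ℂ) (x r : I), (C * M) x r = M (star x) r := by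
    intro M x r
    rw [Matrix.mul_apply]
    have h : ∀ k, C x k * M k r = if k = star x then M k r else 0 := by
      intro k; rw [hC]
      by_cases h : k = star x
      · simp [h]
      · simp [h]
    simp only [h, Finset.sum_ite_eq', Finset.mem_univ, if_true]
  have hC2 : C * C = 1 := by
    ext x r
    rw [hmulC, hC, Matrix.one_apply]
    by_cases h : x = r
    · simp [h]
    · have h2 : star r ≠ star x := by
        intro hr; apply h
        rw [← hstar x, ← hr, hstar]
      simp [h2, h]
  have hSS' : S * S = C := by rw [← hSS, pow_two]
  have hCS : C * S = S * C := by rw [← hSS, ← pow_succ, ← pow_succ']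
  have hSstar : ∀ p q, S (star p) q = S p (star q) := by
    intro p q
    have h : (C * S) p q = (S * C) p q := by rw [hCS]
    rw [hCmul, hmulC] at h
    exact h
  -- nonvanishing
  have hθh0 : ∀ x, θhalf x ≠ 0 := by
    intro x h
    exact hθ x (by rw [← hθhalf, h]; ring)
  -- diagonal matrices
  set Ti : Matrix I I ℂ := Matrix.diagonal (fun x => ζ / θ x) with hTi
  have hTTi : T * Ti = 1 := by
    rw [hT, hTi, Matrix.diagonal_mul_diagonal]
    rw [show (fun x => θ x / ζ * (ζ / θ x)) = fun _ => (1 : ℂ) from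
      funext fun x => by
        rw [div_mul_div_comm, mul_comm ζ (θ x)]
        exact div_self (mul_ne_zero (hθ x) hζ)]
    exact Matrix.diagonal_one
  have hTiC : C * Ti = Ti * C := by
    ext x r
    rw [hCmul, hmulC, hTi]
    by_cases h : r = star x
    · subst h
      simp [Matrix.diagonal, hstar, hθs]
    · have h2 : x ≠ star r := by
        intro hx; apply h; rw [hx, hstar]
      simp [Matrix.diagonal, h, h2, Ne.symm h]
  set A : Matrix I I ℂ := S * (T * (T * S)) with hA
  set B : Matrix I I ℂ := S * (Ti * (Ti * S)) with hB
  -- T S T S T = S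
  have h6 : S * (T * (S * (T * (S * T)))) = C := by
    rw [← hST]; noncomm_ring
  have h7 : C * (T * (S * (T * (S * T)))) = C * S := by
    calc C * (T * (S * (T * (S * T))))
        = S * (S * (T * (S * (T * (S * T))))) := by rw [← hSS']; noncomm_ring
      _ = S * C := by rw [h6]
      _ = C * S := hCS.symm
  have hTSTST : T * (S * (T * (S * T))) = S := by
    calc T * (S * (T * (S * T)))
        = (C * C) * (T * (S * (T * (S * T)))) := by rw [hC2, one_mul]
      _ = C * (C * (T * (S * (T * (S * T))))) := by noncomm_ring
      _ = C * (C * S) := by rw [h7]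
      _ = (C * C) * S := by noncomm_ring
      _ = S := by rw [hC2, one_mul]
  have hATAT : A * (T * (A * T)) = C := by
    calc A * (T * (A * T))
        = (S * T) * ((T * (S * (T * (S * T)))) * (T * (S * T))) := by
          rw [hA]; noncomm_ring
      _ = (S * T) * (S * (T * (S * T))) := by rw [hTSTST]
      _ = (S * T) ^ 3 := by noncomm_ring
      _ = C := hST
  have hCmoves : C * (Ti * (Ti * S)) = Ti * (Ti * (C * S)) := by
    calc C * (Ti * (Ti * S)) = (C * Ti) * (Ti * S) := by noncomm_ring
      _ = (Ti * C) * (Ti * S) := by rw [hTiC]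
      _ = Ti * ((C * Ti) * S) := by noncomm_ring
      _ = Ti * ((Ti * C) * S) := by rw [hTiC]
      _ = Ti * (Ti * (C * S)) := by noncomm_ring
  have hSCS : S * (C * S) = 1 := by
    have h : S * (C * S) = C * C := by rw [← hSS']; noncomm_ring
    rw [h, hC2]
  have hAB : A * B = 1 := by
    calc A * B = S * (T * (T * ((S * S) * (Ti * (Ti * S))))) := by
          rw [hA, hB]; noncomm_ring
      _ = S * (T * (T * (C * (Ti * (Ti * S))))) := by rw [hSS']
      _ = S * (T * (T * (Ti * (Ti * (C * S))))) := by rw [hCmoves]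
      _ = S * ((T * (T * Ti)) * (Ti * (C * S))) := by noncomm_ring
      _ = S * (T * (Ti * (C * S))) := by rw [hTTi, mul_one]
      _ = S * ((T * Ti) * (C * S)) := by noncomm_ring
      _ = S * (C * S) := by rw [hTTi, one_mul]
      _ = 1 := hSCS
  have hBA : B * A = 1 := mul_eq_one_comm.mp hAB
  have h1 : T * (A * T) = B * C := by
    calc T * (A * T) = (B * A) * (T * (A * T)) := by rw [hBA, one_mul]
      _ = B * (A * (T * (A * T))) := by noncomm_ring
      _ = B * C := by rw [hATAT]
  have hBeq : B = (T * (A * T)) * C := by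
    calc B = (B * C) * C := by rw [mul_assoc, hC2, mul_one]
      _ = (T * (A * T)) * C := by rw [h1]
  -- entries of A and B
  have haA : ∀ x r, A x r = (∑ p, S x p * θ p ^ 2 * S p r) / ζ ^ 2 := by
    intro x r
    rw [hA, Matrix.mul_apply, Finset.sum_div]
    apply Finset.sum_congr rfl
    intro p _
    rw [hT, Matrix.diagonal_mul, Matrix.diagonal_mul]
    field_simp
  have hbB : ∀ x r, B x r = ζ ^ 2 * ∑ q, S x q * S q r / θ q ^ 2 := by
    intro x r
    rw [hB, Matrix.mul_apply, Finset.mul_sum]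
    apply Finset.sum_congr rfl
    intro q _
    rw [hTi, Matrix.diagonal_mul, Matrix.diagonal_mul]
    field_simp
  -- key identity (multiplicative form)
  have hkey : ∀ x r, ζ ^ 6 * (∑ q, S x q * S q r / θ q ^ 2)
      = θ x * θ r * (∑ p, S x p * θ p ^ 2 * S p (star r)) := by
    intro x r
    have h2 : B x r = (θ x / ζ) * (A x (star r) * (θ (star r) / ζ)) := by
      rw [hBeq, hmulC, hT, Matrix.diagonal_mul, Matrix.mul_diagonal]
    have h3 : ζ ^ 2 * (∑ q, S x q * S q r / θ q ^ 2)
        = (θ x / ζ) * ((∑ p, S x p * θ p ^ 2 * S p (star r)) / ζ ^ 2 * (θ r / ζ)) := by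
      rw [← hbB, h2, haA, hθs]
    calc ζ ^ 6 * (∑ q, S x q * S q r / θ q ^ 2)
        = ζ ^ 4 * (ζ ^ 2 * (∑ q, S x q * S q r / θ q ^ 2)) := by ring
      _ = ζ ^ 4 * ((θ x / ζ) * ((∑ p, S x p * θ p ^ 2 * S p (star r)) / ζ ^ 2 * (θ r / ζ))) := by
          rw [h3]
      _ = θ x * θ r * (∑ p, S x p * θ p ^ 2 * S p (star r)) := by
          field_simp
  have hkey' : ∀ x r, (∑ q, S x q * S q r / θ q ^ 2)
      = θ x * θ r * (∑ p, S x p * θ p ^ 2 * S p (star r)) / ζ ^ 6 := by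
    intro x r
    rw [← hkey x r, mul_div_cancel_left₀ _ (pow_ne_zero 6 hζ)]
  -- reindexing along the involution
  have hsum_star : ∀ (f : I → ℂ), (∑ r, f (star r)) = ∑ r, f r := by
    intro f
    exact Function.Bijective.sum_comp (Function.Involutive.bijective hstar) f
  have hastar : ∀ z r, (∑ p, S (star z) p * θ p ^ 2 * S p (star r))
      = ∑ p, S z p * θ p ^ 2 * S p r := by
    intro z r
    have h1 : ∀ p, S (star z) p * θ p ^ 2 * S p (star r)
        = S z (star p) * θ (star p) ^ 2 * S (star p) r := by
      intro p
      rw [hθs p, hSstar z p, hSstar p r]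
    simp only [h1]
    exact hsum_star (fun p => S z p * θ p ^ 2 * S p r)
  have hSYstar : ∀ r, S (star Y) (star r) = S Y r := by
    intro r; rw [hSstar, hstar]
  have hS1star : ∀ r, S one (star r) = S one r := by
    intro r
    calc S one (star r) = S (star one) (star r) := by rw [hone]
      _ = S one (star (star r)) := hSstar one (star r)
      _ = S one r := by rw [hstar]
  -- generic triple sum swap
  have swap3 : ∀ (F : I → I → I → ℂ),
      (∑ a, ∑ b, ∑ c, F a b c) = ∑ c, ∑ a, ∑ b, F a b c := by
    intro F
    calc (∑ a, ∑ b, ∑ c, F a b c) = ∑ a, ∑ c, ∑ b, F a b c :=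
          Finset.sum_congr rfl (fun a _ => Finset.sum_comm)
      _ = ∑ c, ∑ a, ∑ b, F a b c := Finset.sum_comm
  -- Step 1: rearrange the triple sum
  have step1 : (∑ P', ∑ Q, S (star Z) P' * S (star X) Q * (θ P' / θ Q) ^ 2 *
        (∑ R, S P' R * S Q R * S (star Y) R / S one R))
      = ∑ R, (∑ p, S (star Z) p * θ p ^ 2 * S p R) *
          ((∑ q, S (star X) q * S q R / θ q ^ 2) * (S (star Y) R / S one R)) := by
    have e1 : ∀ P' Q : I, S (star Z) P' * S (star X) Q * (θ P' / θ Q) ^ 2 *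
          (∑ R, S P' R * S Q R * S (star Y) R / S one R)
        = ∑ R, (S (star Z) P' * θ P' ^ 2 * S P' R) *
            ((S (star X) Q * S Q R / θ Q ^ 2) * (S (star Y) R / S one R)) := by
      intro P' Q
      rw [Finset.mul_sum]
      apply Finset.sum_congr rfl
      intro R _
      field_simp
    have e2 : ∀ R : I, (∑ p, S (star Z) p * θ p ^ 2 * S p R) *
          ((∑ q, S (star X) q * S q R / θ q ^ 2) * (S (star Y) R / S one R))
        = ∑ p, ∑ q, (S (star Z) p * θ p ^ 2 * S p R) *
            ((S (star X) q * S q R / θ q ^ 2) * (S (star Y) R / S one R)) := by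
      intro R
      rw [Finset.sum_mul]
      apply Finset.sum_congr rfl
      intro p _
      rw [Finset.sum_mul, Finset.mul_sum]
    simp only [e1]
    rw [swap3]
    apply Finset.sum_congr rfl
    intro R _
    exact (e2 R).symm
  -- assemble the left-hand side
  have hL : (θhalf Z / θhalf X) *
        (∑ P', ∑ Q, S (star Z) P' * S (star X) Q * (θ P' / θ Q) ^ 2 *
          (∑ R, S P' R * S Q R * S (star Y) R / S one R))
      = ∑ R, θhalf Z * θhalf X * θ R *
          ((∑ p, S Z p * θ p ^ 2 * S p R) *
            ((∑ p, S (star X) p * θ p ^ 2 * S p R) * (S Y R / S one R))) / ζ ^ 6 := by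
    rw [step1]
    have e3 : ∀ R : I, (∑ q, S (star X) q * S q R / θ q ^ 2)
        = θ X * θ R * (∑ p, S (star X) p * θ p ^ 2 * S p (star R)) / ζ ^ 6 := by
      intro R
      rw [hkey' (star X) R, hθs]
    simp only [e3]
    rw [Finset.mul_sum]
    rw [← hsum_star (fun R => θhalf Z / θhalf X *
        ((∑ p, S (star Z) p * θ p ^ 2 * S p R) *
          (θ X * θ R * (∑ p, S (star X) p * θ p ^ 2 * S p (star R)) / ζ ^ 6 *
            (S (star Y) R / S one R))))]
    apply Finset.sum_congr rfl
    intro R _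
    show θhalf Z / θhalf X *
        ((∑ p, S (star Z) p * θ p ^ 2 * S p (star R)) *
          (θ X * θ (star R) * (∑ p, S (star X) p * θ p ^ 2 * S p (star (star R))) / ζ ^ 6 *
            (S (star Y) (star R) / S one (star R)))) = _
    rw [hastar Z R, hθs, hstar, hSYstar, hS1star, ← hθhalf X]
    rw [show θhalf Z / θhalf X *
        ((∑ p, S Z p * θ p ^ 2 * S p R) *
          (θhalf X ^ 2 * θ R * (∑ p, S (star X) p * θ p ^ 2 * S p R) / ζ ^ 6 *
            (S Y R / S one R)))
      = (θhalf X / θhalf X) * (θhalf Z * θhalf X * θ R *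
          ((∑ p, S Z p * θ p ^ 2 * S p R) *
            ((∑ p, S (star X) p * θ p ^ 2 * S p R) * (S Y R / S one R))) / ζ ^ 6) from by
        ring]
    rw [div_self (hθh0 X), one_mul]
  -- assemble the right-hand side
  have hPent : ∀ z r, P z r = θhalf z / ζhalf *
      ((∑ p, S z p * θ p ^ 2 * S p r) / ζ ^ 2 * (θhalf r / ζhalf)) := by
    intro z r
    have hP2 : P = Thalf * (A * Thalf) := by rw [hP, hA]; noncomm_ring
    rw [hP2, hThalf, Matrix.diagonal_mul, Matrix.mul_diagonal, haA]
  have hR : (∑ R, P Z R * P (star X) R * S Y R / S one R)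
      = ∑ R, θhalf Z * θhalf X * θ R *
          ((∑ p, S Z p * θ p ^ 2 * S p R) *
            ((∑ p, S (star X) p * θ p ^ 2 * S p R) * (S Y R / S one R))) / ζ ^ 6 := by
    apply Finset.sum_congr rfl
    intro R _
    rw [hPent, hPent, hθhalfs, ← hθhalf R, ← hζhalf]
    ring
  simp only [hN]
  rw [hL]
  exact hR.symm
end

section
/- For all X, Y, Z ∈ I, ∑_{P',Q∈I} S_{Z*P'} S_{X*Q} (θ_{P'}/θ_Q)² N^Y_{P'Q} = ∑_{R∈I} (S⁻¹T̂²S)_{ZR} · (S⁻¹T̂⁻²S)_{XR} · (S⁻¹)_{YR} / S_{1R}. -/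
open Finset Matrix

/-- For a modular datum,
`∑_{P',Q} S_{Z*P'} S_{X*Q} (θ_{P'}/θ_Q)² N^Y_{P'Q}
  = ∑_R (S⁻¹T̂²S)_{ZR} (S⁻¹T̂⁻²S)_{XR} (S⁻¹)_{YR} / S_{1R}`. -/
theorem twist_sum_eq_matrix_sum {I : Type*} [Fintype I] [DecidableEq I]
    (one : I) (star : I → I)
    (hstar : ∀ X, star (star X) = X) (hone : star one = one)
    (S : Matrix I I ℂ) (hSsymm : ∀ X Y, S X Y = S Y X)
    (θ : I → ℂ) (hθ : ∀ X, θ X ≠ 0) (hθs : ∀ X, θ (star X) = θ X)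
    (ζ : ℂ) (hζ : ζ ≠ 0)
    (C : Matrix I I ℂ) (hC : ∀ X Y, C X Y = if Y = star X then 1 else 0)
    (T : Matrix I I ℂ) (hT : T = Matrix.diagonal (fun X => θ X / ζ))
    (hST : (S * T) ^ 3 = C)
    (hSS : S ^ 2 = C)
    (hS1 : ∀ R, S one R ≠ 0)
    (N : I → I → I → ℂ)
    (hN : ∀ Z X Y, N Z X Y = ∑ R, S X R * S Y R * S (star Z) R / S one R)
    (X Y Z : I) :
    ∑ P', ∑ Q, S (star Z) P' * S (star X) Q * (θ P' / θ Q) ^ 2 * N Y P' Q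
      = ∑ R, (S⁻¹ * T ^ 2 * S) Z R * (S⁻¹ * (T ^ 2)⁻¹ * S) X R * S⁻¹ Y R / S one R := by
  -- C * C = 1
  have hC2 : C * C = 1 := by
    ext A B
    rw [Matrix.mul_apply, Matrix.one_apply, Finset.sum_eq_single (star A)]
    · simp [hC, hstar, eq_comm]
    · intro b _ hb
      simp [hC, hb]
    · intro h; exact absurd (Finset.mem_univ _) h
  -- S is invertible with inverse C * S
  have hS4 : S * (C * S) = 1 := by
    calc S * (C * S) = S * (S ^ 2 * S) := by rw [hSS]
    _ = S ^ 4 := by rw [← pow_succ, ← pow_succ']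
    _ = S ^ 2 * S ^ 2 := by rw [← pow_add]
    _ = 1 := by rw [hSS, hC2]
  have hSinv : S⁻¹ = C * S := Matrix.inv_eq_right_inv hS4
  have hT2 : T ^ 2 = Matrix.diagonal (fun X => (θ X / ζ) ^ 2) := by
    rw [hT, sq, Matrix.diagonal_mul_diagonal,
      show (fun i => θ i / ζ * (θ i / ζ)) = fun X => (θ X / ζ) ^ 2 from
        funext fun i => by ring]
  have hT2inv : (T ^ 2)⁻¹ = Matrix.diagonal (fun X => (ζ / θ X) ^ 2) := by
    apply Matrix.inv_eq_right_inv
    rw [hT2, Matrix.diagonal_mul_diagonal,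
      show (fun i => (θ i / ζ) ^ 2 * (ζ / θ i) ^ 2) = fun _ : I => (1 : ℂ) from
        funext fun i => by
          have h1 := hθ i
          field_simp]
    exact Matrix.diagonal_one
  -- entry computations
  have eCS : ∀ (A : I) (R : I), (C * S) A R = S (star A) R := by
    intro A R
    simp [Matrix.mul_apply, hC, ite_mul, Finset.sum_ite_eq']
  have e1 : ∀ R, (S⁻¹ * T ^ 2 * S) Z R
      = ∑ P, S (star Z) P * (θ P / ζ) ^ 2 * S P R := by
    intro R
    rw [hSinv, hT2, Matrix.mul_apply]
    refine Finset.sum_congr rfl fun P _ => ?_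
    rw [Matrix.mul_diagonal, eCS]
  have e2 : ∀ R, (S⁻¹ * (T ^ 2)⁻¹ * S) X R
      = ∑ Q, S (star X) Q * (ζ / θ Q) ^ 2 * S Q R := by
    intro R
    rw [hSinv, hT2inv, Matrix.mul_apply]
    refine Finset.sum_congr rfl fun Q _ => ?_
    rw [Matrix.mul_diagonal, eCS]
  have e3 : ∀ R, S⁻¹ Y R = S (star Y) R := by
    intro R; rw [hSinv, eCS]
  have swap : ∀ (f : I → I → I → ℂ),
      ∑ R, ∑ P, ∑ Q, f R P Q = ∑ P, ∑ Q, ∑ R, f R P Q := by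
    intro f
    rw [Finset.sum_comm]
    exact Finset.sum_congr rfl fun P _ => Finset.sum_comm
  have rhs_eq1 : ∀ R, (S⁻¹ * T ^ 2 * S) Z R * (S⁻¹ * (T ^ 2)⁻¹ * S) X R * S⁻¹ Y R / S one R
      = ∑ P, ∑ Q, S (star Z) P * (θ P / ζ) ^ 2 * S P R
          * (S (star X) Q * (ζ / θ Q) ^ 2 * S Q R) * S (star Y) R / S one R := by
    intro R
    rw [e1, e2, e3]
    simp only [Finset.sum_mul, Finset.mul_sum, Finset.sum_div]
    rw [Finset.sum_comm]
  calc ∑ P', ∑ Q, S (star Z) P' * S (star X) Q * (θ P' / θ Q) ^ 2 * N Y P' Q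
      = ∑ P, ∑ Q, ∑ R, S (star Z) P * S (star X) Q * (θ P / θ Q) ^ 2
          * (S P R * S Q R * S (star Y) R / S one R) := by
        simp only [hN, Finset.mul_sum]
    _ = ∑ P, ∑ Q, ∑ R, S (star Z) P * (θ P / ζ) ^ 2 * S P R
          * (S (star X) Q * (ζ / θ Q) ^ 2 * S Q R) * S (star Y) R / S one R := by
        refine Finset.sum_congr rfl fun P _ => Finset.sum_congr rfl fun Q _ =>
          Finset.sum_congr rfl fun R _ => ?_
        have key : (θ P / ζ) ^ 2 * (ζ / θ Q) ^ 2 = (θ P / θ Q) ^ 2 := by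
          have h1 := hθ Q
          field_simp
        rw [← key]
        ring
    _ = ∑ R, ∑ P, ∑ Q, S (star Z) P * (θ P / ζ) ^ 2 * S P R
          * (S (star X) Q * (ζ / θ Q) ^ 2 * S Q R) * S (star Y) R / S one R :=
        (swap fun R P Q => S (star Z) P * (θ P / ζ) ^ 2 * S P R
          * (S (star X) Q * (ζ / θ Q) ^ 2 * S Q R) * S (star Y) R / S one R).symm
    _ = ∑ R, (S⁻¹ * T ^ 2 * S) Z R * (S⁻¹ * (T ^ 2)⁻¹ * S) X R * S⁻¹ Y R / S one R :=
        Finset.sum_congr rfl fun R _ => (rhs_eq1 R).symm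
end

section
/- For all X, Y, Z ∈ I, ∑_{R∈I} (T̂^{1/2} S⁻¹ T̂² S)_{ZR} · (T̂^{-1/2} S⁻¹ T̂⁻² S)_{XR} · (S⁻¹)_{YR} / S_{1R} = ∑_{R∈I} (T̂^{1/2} S T̂² S)_{ZR} · (T̂^{-1/2} S T̂⁻² S)_{XR} · S_{YR} / S_{1R}; that is, in the summed expression every occurrence of S⁻¹ may be replaced by S (corresponding to replacing every object by its dual). -/
open Finset Matrix

/-- For a modular datum, in the summed expression every occurrence of `S⁻¹` may be
replaced by `S` (corresponding to replacing every object by its dual):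
`∑_R (T̂^{1/2} S⁻¹ T̂² S)_{ZR} (T̂^{-1/2} S⁻¹ T̂⁻² S)_{XR} (S⁻¹)_{YR} / S_{1R}
  = ∑_R (T̂^{1/2} S T̂² S)_{ZR} (T̂^{-1/2} S T̂⁻² S)_{XR} S_{YR} / S_{1R}`. -/
theorem dual_replacement_sum {I : Type*} [Fintype I] [DecidableEq I]
    (one : I) (star : I → I)
    (hstar : ∀ X, star (star X) = X) (hone : star one = one)
    (S : Matrix I I ℂ) (hSsymm : ∀ X Y, S X Y = S Y X)
    (θ : I → ℂ) (hθ : ∀ X, θ X ≠ 0) (hθs : ∀ X, θ (star X) = θ X)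
    (ζ : ℂ) (hζ : ζ ≠ 0)
    (C : Matrix I I ℂ) (hC : ∀ X Y, C X Y = if Y = star X then 1 else 0)
    (T : Matrix I I ℂ) (hT : T = Matrix.diagonal (fun X => θ X / ζ))
    (hST : (S * T) ^ 3 = C)
    (hSS : S ^ 2 = C)
    (hS1 : ∀ R, S one R ≠ 0)
    (t : I → ℂ) (ht : ∀ X, t X ^ 2 = θ X / ζ) (hts : ∀ X, t (star X) = t X)
    (Thalf : Matrix I I ℂ) (hThalf : Thalf = Matrix.diagonal t)
    (X Y Z : I) :
    ∑ R, (Thalf * S⁻¹ * T ^ 2 * S) Z R * (Thalf⁻¹ * S⁻¹ * (T ^ 2)⁻¹ * S) X R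
        * S⁻¹ Y R / S one R
      = ∑ R, (Thalf * S * T ^ 2 * S) Z R * (Thalf⁻¹ * S * (T ^ 2)⁻¹ * S) X R
        * S Y R / S one R := by

  -- basic facts about C
  have hmulC : ∀ (M : Matrix I I ℂ) (i j : I), (M * C) i j = M i (star j) := by
    intro M i j
    simp only [Matrix.mul_apply, hC]
    have hiff : ∀ k : I, (j = star k) ↔ (k = star j) :=
      fun k => ⟨fun h => by rw [h, hstar], fun h => by rw [h, hstar]⟩
    simp_rw [hiff, mul_ite, mul_one, mul_zero, Finset.sum_ite_eq', Finset.mem_univ, if_true]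
  have hCmulC : C * C = 1 := by
    ext i j
    rw [hmulC, hC, Matrix.one_apply]
    have hinj : Function.Injective star := Function.Involutive.injective hstar
    simp [hinj.eq_iff, eq_comm]
  have hCS : C * S = S * C := by
    rw [← hSS, sq, mul_assoc]
  have hSinv : S⁻¹ = S * C :=
    Matrix.inv_eq_right_inv (by rw [← mul_assoc, ← sq, hSS, hCmulC])
  have hdiagC : ∀ (d : I → ℂ), (∀ k, d (star k) = d k) →
      Matrix.diagonal d * C = C * Matrix.diagonal d := by
    intro d hd
    ext i j
    rw [Matrix.diagonal_mul, Matrix.mul_diagonal, hC]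
    by_cases h : j = star i
    · subst h; simp [hd]
    · simp [h]
  have hT2 : T ^ 2 = Matrix.diagonal (fun i => (θ i / ζ) ^ 2) := by
    rw [hT, sq, Matrix.diagonal_mul_diagonal]
    exact congrArg Matrix.diagonal (funext fun i => (sq _).symm)
  have hθζ : ∀ i : I, (θ i / ζ) ^ 2 ≠ 0 := fun i => pow_ne_zero _ (div_ne_zero (hθ i) hζ)
  have hT2inv : (T ^ 2)⁻¹ = Matrix.diagonal (fun i => ((θ i / ζ) ^ 2)⁻¹) :=
    Matrix.inv_eq_right_inv (by
      rw [hT2, Matrix.diagonal_mul_diagonal, ← Matrix.diagonal_one]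
      exact congrArg Matrix.diagonal (funext fun i => mul_inv_cancel₀ (hθζ i)))
  have hT2C : T ^ 2 * C = C * T ^ 2 := by
    rw [hT2]; exact hdiagC _ (fun k => by simp [hθs])
  have hT2invC : (T ^ 2)⁻¹ * C = C * (T ^ 2)⁻¹ := by
    rw [hT2inv]; exact hdiagC _ (fun k => by simp [hθs])
  -- key matrix identities
  have key1 : Thalf * S⁻¹ * T ^ 2 * S = Thalf * S * T ^ 2 * S * C := by
    rw [hSinv, ← mul_assoc Thalf S C, mul_assoc (Thalf * S) C (T ^ 2), ← hT2C,
      ← mul_assoc (Thalf * S) (T ^ 2) C, mul_assoc _ C S, hCS, ← mul_assoc]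
  have key2 : Thalf⁻¹ * S⁻¹ * (T ^ 2)⁻¹ * S = Thalf⁻¹ * S * (T ^ 2)⁻¹ * S * C := by
    rw [hSinv, ← mul_assoc Thalf⁻¹ S C, mul_assoc (Thalf⁻¹ * S) C ((T ^ 2)⁻¹), ← hT2invC,
      ← mul_assoc (Thalf⁻¹ * S) ((T ^ 2)⁻¹) C, mul_assoc _ C S, hCS, ← mul_assoc]
  have e1 : ∀ j, (Thalf * S⁻¹ * T ^ 2 * S) Z j = (Thalf * S * T ^ 2 * S) Z (star j) := by
    intro j; rw [key1, hmulC]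
  have e2 : ∀ j, (Thalf⁻¹ * S⁻¹ * (T ^ 2)⁻¹ * S) X j
      = (Thalf⁻¹ * S * (T ^ 2)⁻¹ * S) X (star j) := by
    intro j; rw [key2, hmulC]
  have e3 : ∀ j, S⁻¹ Y j = S Y (star j) := by
    intro j; rw [hSinv, hmulC]
  have e4 : ∀ j, S one (star j) = S one j := by
    intro j
    have h1 : (S * C) one j = S one (star j) := hmulC S one j
    have h2 : (C * S) one j = S one j := by
      rw [Matrix.mul_apply]
      simp_rw [hC]
      simp_rw [ite_mul, one_mul, zero_mul]
      rw [Finset.sum_ite_eq']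
      simp [hone]
    rw [← h1, ← hCS, h2]
  calc ∑ R, (Thalf * S⁻¹ * T ^ 2 * S) Z R * (Thalf⁻¹ * S⁻¹ * (T ^ 2)⁻¹ * S) X R
        * S⁻¹ Y R / S one R
      = ∑ R, (Thalf * S * T ^ 2 * S) Z (star R) * (Thalf⁻¹ * S * (T ^ 2)⁻¹ * S) X (star R)
        * S Y (star R) / S one (star (star R)) := by
        refine Finset.sum_congr rfl fun R _ => ?_
        rw [e1, e2, e3, hstar]
    _ = ∑ R, (Thalf * S * T ^ 2 * S) Z R * (Thalf⁻¹ * S * (T ^ 2)⁻¹ * S) X R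
        * S Y R / S one (star R) := by
        exact Fintype.sum_bijective star (Function.Involutive.bijective hstar) _ _
          (fun R => rfl)
    _ = ∑ R, (Thalf * S * T ^ 2 * S) Z R * (Thalf⁻¹ * S * (T ^ 2)⁻¹ * S) X R
        * S Y R / S one R := by
        refine Finset.sum_congr rfl fun R _ => ?_
        rw [e4]
end
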